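/- arXiv:1801.02908 — 7 statements merged into one kernel-verified Lean document; each statement's English description precedes it below -/
import Mathlib

section
/- Let v be a nonnegative real random variable, let t ≥ 0, and let δ ∈ (0,1] satisfy δ ≥ 2·Pr[v > t]. Let h = ⌈1/δ⌉ and let v¹, …, v^h be independent copies of v. Then sup_{π>0} π·Pr[v·1[v>t] > π] ≤ 2δ · sup_{π>0} π·Pr[max_{1≤i≤h} v^i > π]. (In words: the optimal posted-price revenue from the truncated-to-the-tail value v·1[v>t] is at most 2δ times the optimal revenue of posting a single price to ⌈1/δ⌉ i.i.d. buyers.) -/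
/-!
Fix a price `π > 0` and put `s = max t π`, so that the truncated value exceeds `π` exactly when
`v > s`. With `p = Pr[v > s] ≤ δ/2`, some buyer's value exceeds `s` with probability
`1 - (1 - p)^h ≥ h p / (1 + h p)`, and `h δ ≥ 1` turns this into `p ≤ 2δ (1 - (1 - p)^h)`.
Multiplying by `π` and lowering the price `s` to `π` in the multi-buyer auction gives the bound.
-/

open MeasureTheory ProbabilityTheory Set

lemma one_sub_pow_le_inv_one_add_mul {p : ℝ} (hp0 : 0 ≤ p) (hp1 : p ≤ 1) (n : ℕ) :
    (1 - p) ^ n ≤ (1 + n * p)⁻¹ :=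
  calc (1 - p) ^ n ≤ Real.exp (-p) ^ n :=
        pow_le_pow_left₀ (by linarith) (Real.one_sub_le_exp_neg p) n
    _ = (Real.exp (n * p))⁻¹ := by rw [← Real.exp_nat_mul, ← Real.exp_neg, mul_neg]
    _ ≤ (1 + n * p)⁻¹ :=
        inv_anti₀ (by positivity) (by linarith [Real.add_one_le_exp (n * p)])

lemma le_two_mul_mul_one_sub_one_sub_pow {p δ : ℝ} {n : ℕ} (hp0 : 0 ≤ p) (hp1 : p ≤ 1)
    (hpδ : p ≤ δ) (hnδ : 1 ≤ n * δ) :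
    p ≤ 2 * δ * (1 - (1 - p) ^ n) := by
  have hpos : 0 < 1 + n * p := by positivity
  calc p ≤ 2 * δ * (n * p / (1 + n * p)) := by
        rw [mul_div_assoc', le_div_iff₀ hpos]
        nlinarith [mul_nonneg hp0 (sub_nonneg.2 hnδ),
          mul_nonneg (mul_nonneg n.cast_nonneg hp0) (sub_nonneg.2 hpδ)]
    _ = 2 * δ * (1 - (1 + n * p)⁻¹) := by field_simp; ring
    _ ≤ 2 * δ * (1 - (1 - p) ^ n) := by
        gcongr
        · linarith
        · exact one_sub_pow_le_inv_one_add_mul hp0 hp1 n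

lemma one_sub_pow_le_measureReal_exists_lt {Ω ι : Type*} [MeasurableSpace Ω] [Fintype ι]
    {μ : Measure Ω} [IsProbabilityMeasure μ] {v : Ω → ℝ} (hv : Measurable v)
    {vs : ι → Ω → ℝ} (hindep : iIndepFun vs μ) (hid : ∀ i, IdentDistrib (vs i) v μ μ)
    (s : ℝ) :
    1 - (1 - μ.real {ω | s < v ω}) ^ Fintype.card ι ≤ μ.real {ω | ∃ i, s < vs i ω} := by
  have hcompl : {ω | ∃ i, s < vs i ω}ᶜ = ⋂ i, vs i ⁻¹' Iic s := by ext; simp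
  have hprod :
      μ.real (⋂ i, vs i ⁻¹' Iic s) = (1 - μ.real {ω | s < v ω}) ^ Fintype.card ι := by
    rw [measureReal_def, hindep.meas_iInter fun i ↦ ⟨Iic s, measurableSet_Iic, rfl⟩,
      ENNReal.toReal_prod]
    simp_rw [(hid _).measure_mem_eq measurableSet_Iic]
    rw [Finset.prod_const, Finset.card_univ, ← measureReal_def,
      ← probReal_compl_eq_one_sub (measurableSet_lt measurable_const hv)]
    congr 2
    ext; simp
  have hunion :=
    measureReal_union_le (μ := μ) {ω | ∃ i, s < vs i ω} {ω | ∃ i, s < vs i ω}ᶜ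
  rw [union_compl_self, probReal_univ, hcompl, hprod] at hunion
  linarith

lemma measure_lt_le_mul_measure_exists_lt {Ω ι : Type*} [MeasurableSpace Ω] [Fintype ι]
    {μ : Measure Ω} [IsProbabilityMeasure μ] {v : Ω → ℝ} (hv : Measurable v)
    {vs : ι → Ω → ℝ} (hindep : iIndepFun vs μ) (hid : ∀ i, IdentDistrib (vs i) v μ μ)
    {s δ : ℝ} (hδ : 2 * μ.real {ω | s < v ω} ≤ δ) (hnδ : 1 ≤ Fintype.card ι * δ) :
    μ {ω | s < v ω} ≤ ENNReal.ofReal (2 * δ) * μ {ω | ∃ i, s < vs i ω} := by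
  have hp0 : 0 ≤ μ.real {ω | s < v ω} := measureReal_nonneg
  calc μ {ω | s < v ω} = ENNReal.ofReal (μ.real {ω | s < v ω}) := by rw [ofReal_measureReal]
    _ ≤ ENNReal.ofReal (2 * δ * (1 - (1 - μ.real {ω | s < v ω}) ^ Fintype.card ι)) :=
        ENNReal.ofReal_le_ofReal <|
          le_two_mul_mul_one_sub_one_sub_pow hp0 measureReal_le_one (by linarith) hnδ
    _ ≤ ENNReal.ofReal (2 * δ * μ.real {ω | ∃ i, s < vs i ω}) := by
        gcongr
        · linarith
        · exact one_sub_pow_le_measureReal_exists_lt hv hindep hid s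
    _ = ENNReal.ofReal (2 * δ) * μ {ω | ∃ i, s < vs i ω} := by
        rw [ENNReal.ofReal_mul (by linarith), ofReal_measureReal]

lemma setOf_lt_ite_lt_eq {Ω : Type*} {π : ℝ} (hπ : 0 < π) (t : ℝ) (v : Ω → ℝ) :
    {ω | π < if t < v ω then v ω else 0} = {ω | max t π < v ω} := by
  ext ω
  by_cases htv : t < v ω <;> simp [htv, hπ.le, not_lt_of_ge]

theorem stmt_0_general {Ω : Type*} [MeasurableSpace Ω] (μ : Measure Ω) [IsProbabilityMeasure μ]
    (v : Ω → ℝ) (hv : Measurable v)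
    (t : ℝ) (δ : ℝ) (hδ0 : 0 < δ)
    (hδ : 2 * (μ {ω | t < v ω}).toReal ≤ δ)
    (h : ℕ) (hh : h = ⌈1 / δ⌉₊)
    (vs : Fin h → Ω → ℝ)
    (hindep : iIndepFun vs μ)
    (hid : ∀ i, IdentDistrib (vs i) v μ μ) :
    (⨆ π ∈ Ioi (0 : ℝ), ENNReal.ofReal π * μ {ω | π < (if t < v ω then v ω else 0)})
      ≤ ENNReal.ofReal (2 * δ) *
        (⨆ π ∈ Ioi (0 : ℝ), ENNReal.ofReal π * μ {ω | ∃ i, π < vs i ω}) := by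
  have hhδ : 1 ≤ (Fintype.card (Fin h) : ℝ) * δ := by
    rw [Fintype.card_fin, hh, ← div_le_iff₀ hδ0]
    exact Nat.le_ceil _
  refine iSup₂_le fun π hπ ↦ ?_
  have hs : 2 * μ.real {ω | max t π < v ω} ≤ δ :=
    le_trans (by gcongr; exact measureReal_mono fun ω hω ↦ (le_max_left t π).trans_lt hω) hδ
  calc ENNReal.ofReal π * μ {ω | π < if t < v ω then v ω else 0}
      = ENNReal.ofReal π * μ {ω | max t π < v ω} := by rw [setOf_lt_ite_lt_eq hπ]
    _ ≤ ENNReal.ofReal π * (ENNReal.ofReal (2 * δ) * μ {ω | ∃ i, max t π < vs i ω}) := by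
        gcongr
        exact measure_lt_le_mul_measure_exists_lt hv hindep hid hs hhδ
    _ ≤ ENNReal.ofReal π * (ENNReal.ofReal (2 * δ) * μ {ω | ∃ i, π < vs i ω}) := by
        gcongr
        exact le_max_right t π
    _ = ENNReal.ofReal (2 * δ) * (ENNReal.ofReal π * μ {ω | ∃ i, π < vs i ω}) :=
        mul_left_comm _ _ _
    _ ≤ ENNReal.ofReal (2 * δ) *
        (⨆ π ∈ Ioi (0 : ℝ), ENNReal.ofReal π * μ {ω | ∃ i, π < vs i ω}) := by
        gcongr
        exact le_iSup₂_of_le π hπ le_rfl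

/-- **Lemma `addbuyers`.** If `δ ≥ 2·Pr[v > t]`, then the optimal posted-price revenue
from the truncated value `v·1[v>t]` is at most `2δ` times the optimal posted-price
revenue from `h = ⌈1/δ⌉` i.i.d. copies of `v`. -/
theorem stmt_0 {Ω : Type*} [MeasurableSpace Ω] (μ : Measure Ω) [IsProbabilityMeasure μ]
    (v : Ω → ℝ) (hv : Measurable v) (hv0 : ∀ ω, 0 ≤ v ω)
    (t : ℝ) (ht : 0 ≤ t) (δ : ℝ) (hδ0 : 0 < δ) (hδ1 : δ ≤ 1)
    (hδ : 2 * (μ {ω | t < v ω}).toReal ≤ δ)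
    (h : ℕ) (hh : h = ⌈1 / δ⌉₊)
    (vs : Fin h → Ω → ℝ) (hmeas : ∀ i, Measurable (vs i))
    (hindep : iIndepFun vs μ)
    (hid : ∀ i, IdentDistrib (vs i) v μ μ) :
    (⨆ π ∈ Ioi (0 : ℝ), ENNReal.ofReal π * μ {ω | π < (if t < v ω then v ω else 0)})
      ≤ ENNReal.ofReal (2 * δ) *
        (⨆ π ∈ Ioi (0 : ℝ), ENNReal.ofReal π * μ {ω | ∃ i, π < vs i ω}) :=
  stmt_0_general μ v hv t δ hδ0 hδ h hh vs hindep hid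
end

section
/- Let v be a nonnegative real random variable, let γ > 0 and t ≥ 1 be reals, and suppose (i) Pr[v ≤ t·γ] = 1 and (ii) p·Pr[v > p] ≤ γ for every p > 0. Then Var(v) ≤ (2t − 1)·γ². -/
/-!
By the layer-cake formula, `E[v²] = ∫₀^∞ 2p · Pr[v > p] dp`. Since `Pr[v > p] ≤ 1` and
`p · Pr[v > p] ≤ γ`, the integrand is at most `2 · min(p, γ)`, and it vanishes beyond `tγ`.
Hence `Var(v) ≤ E[v²] ≤ ∫₀^{tγ} 2 · min(p, γ) dp = (2t − 1)γ²`.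
-/

open MeasureTheory ProbabilityTheory Set

theorem integral_two_mul_min {γ c : ℝ} (hγ : 0 ≤ γ) (hγc : γ ≤ c) :
    ∫ p in (0)..c, 2 * min p γ = (2 * c - γ) * γ := by
  have hint : ∀ a b : ℝ, IntervalIntegrable (fun p ↦ 2 * min p γ) volume a b := fun a b ↦
    (continuous_const.mul (continuous_id.min continuous_const)).intervalIntegrable a b
  have below : ∫ p in (0)..γ, 2 * min p γ = ∫ p in (0)..γ, 2 * p :=
    intervalIntegral.integral_congr fun p hp ↦ by
      rw [uIcc_of_le hγ] at hp
      simp [min_eq_left hp.2]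
  have above : ∫ p in γ..c, 2 * min p γ = ∫ _ in γ..c, 2 * γ :=
    intervalIntegral.integral_congr fun p hp ↦ by
      rw [uIcc_of_le hγc] at hp
      simp [min_eq_right hp.1]
  rw [← intervalIntegral.integral_add_adjacent_intervals (hint 0 γ) (hint γ c), below, above,
    intervalIntegral.integral_const_mul, integral_id, intervalIntegral.integral_const]
  simp only [smul_eq_mul]
  ring

namespace MeasureTheory

variable {Ω : Type*} [MeasurableSpace Ω] {μ : Measure Ω} {f : Ω → ℝ}

theorem lintegral_sq_eq_lintegral_meas_lt (hf0 : 0 ≤ᵐ[μ] f) (hf : AEMeasurable f μ) :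
    ∫⁻ ω, ENNReal.ofReal (f ω ^ 2) ∂μ =
      ∫⁻ p in Ioi 0, μ {ω | p < f ω} * ENNReal.ofReal (2 * p) := by
  have layer_cake := lintegral_comp_eq_lintegral_meas_lt_mul μ hf0 hf (g := fun p ↦ 2 * p)
    (fun p _ ↦ (continuous_const.mul continuous_id).intervalIntegrable 0 p)
    ((ae_restrict_mem measurableSet_Ioi).mono fun p (hp : 0 < p) ↦ by positivity)
  rw [← layer_cake]
  congr! 3 with ω
  rw [intervalIntegral.integral_const_mul, integral_id]
  ring

theorem integral_sq_le_of_mul_meas_lt_le [IsProbabilityMeasure μ] (hf0 : 0 ≤ᵐ[μ] f)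
    (hf : AEMeasurable f μ) {γ c : ℝ} (hγ : 0 ≤ γ) (hγc : γ ≤ c) (hfc : ∀ᵐ ω ∂μ, f ω ≤ c)
    (hrev : ∀ p, 0 < p → p * μ.real {ω | p < f ω} ≤ γ) :
    ∫ ω, f ω ^ 2 ∂μ ≤ (2 * c - γ) * γ := by
  set F : ℝ → ENNReal := fun p ↦ μ {ω | p < f ω} * ENNReal.ofReal (2 * p)
  have hF_nonpos {p : ℝ} (hp : p ≤ 0) : F p = 0 := by
    simp only [F]
    rw [ENNReal.ofReal_of_nonpos (by linarith), mul_zero]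
  have hF_le (p : ℝ) : F p ≤ ENNReal.ofReal (2 * min p γ) := by
    rcases le_or_gt p 0 with hp | hp
    · simp [hF_nonpos hp]
    have hF : F p = ENNReal.ofReal (2 * p * μ.real {ω | p < f ω}) := by
      rw [ENNReal.ofReal_mul (by positivity), ofReal_measureReal, mul_comm]
    rw [hF, mul_assoc]
    gcongr
    exact le_min (mul_le_of_le_one_right hp.le measureReal_le_one) (hrev p hp)
  have hF_supp : Function.support F ⊆ Ioc 0 c := by
    refine Function.support_subset_iff'.2 fun p hp ↦ ?_
    rcases le_or_gt p 0 with hp0 | hp0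
    · exact hF_nonpos hp0
    have hcp : c < p := by simpa [hp0] using hp
    have hnull : μ {ω | p < f ω} = 0 :=
      measure_mono_null (fun ω (h : p < f ω) ↦ show ¬f ω ≤ c by linarith) (ae_iff.1 hfc)
    simp [F, hnull]
  have hlint : ∫⁻ ω, ENNReal.ofReal (f ω ^ 2) ∂μ ≤ ENNReal.ofReal ((2 * c - γ) * γ) :=
    calc ∫⁻ ω, ENNReal.ofReal (f ω ^ 2) ∂μ = ∫⁻ p in Ioi 0, F p :=
          lintegral_sq_eq_lintegral_meas_lt hf0 hf
      _ ≤ ∫⁻ p, F p := setLIntegral_le_lintegral _ _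
      _ = ∫⁻ p in Ioc 0 c, F p := (setLIntegral_eq_of_support_subset hF_supp).symm
      _ ≤ ∫⁻ p in Ioc 0 c, ENNReal.ofReal (2 * min p γ) := lintegral_mono hF_le
      _ = ENNReal.ofReal (∫ p in Ioc 0 c, 2 * min p γ) := by
          refine (ofReal_integral_eq_lintegral_ofReal ?_ ?_).symm
          · exact (continuous_const.mul (continuous_id.min continuous_const)).integrableOn_Ioc
          · filter_upwards [ae_restrict_mem measurableSet_Ioc] with p hp
            have := hp.1
            positivity
      _ = ENNReal.ofReal ((2 * c - γ) * γ) := by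
          rw [← intervalIntegral.integral_of_le (hγ.trans hγc), integral_two_mul_min hγ hγc]
  rw [integral_eq_lintegral_of_nonneg_ae (.of_forall fun ω ↦ sq_nonneg (f ω))
    (hf.pow_const 2).aestronglyMeasurable]
  exact ENNReal.toReal_le_of_le_ofReal (by nlinarith) hlint

end MeasureTheory

/-- **Li–Yao variance lemma (`boundVar`).** A nonnegative value supported on `[0, t·γ]`
whose posted-price revenue is at most `γ` for every price has variance at most `(2t−1)·γ²`. -/
theorem stmt_5 {Ω : Type*} [MeasurableSpace Ω] (μ : Measure Ω) [IsProbabilityMeasure μ]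
    (v : Ω → ℝ) (hv : Measurable v) (hv0 : ∀ ω, 0 ≤ v ω)
    (γ t : ℝ) (hγ : 0 < γ) (ht : 1 ≤ t)
    (hsupp : μ {ω | v ω ≤ t * γ} = 1)
    (hrev : ∀ p, 0 < p → p * (μ {ω | p < v ω}).toReal ≤ γ) :
    variance v μ ≤ (2 * t - 1) * γ ^ 2 := by
  have hbound : ∀ᵐ ω ∂μ, v ω ≤ t * γ := by
    rw [ae_iff_measure_eq (measurableSet_le hv measurable_const).nullMeasurableSet, hsupp,
      measure_univ]
  calc variance v μ ≤ ∫ ω, v ω ^ 2 ∂μ := variance_le_expectation_sq hv.aestronglyMeasurable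
    _ ≤ (2 * (t * γ) - γ) * γ :=
        integral_sq_le_of_mul_meas_lt_le (.of_forall hv0) hv.aemeasurable hγ.le
          (le_mul_of_one_le_left hγ.le ht) hbound hrev
    _ = (2 * t - 1) * γ ^ 2 := by ring
end

section
/- Let D : [0,1] → ℝ be nondecreasing and nonnegative, and suppose the revenue curve R(q) := (1−q)·D(q) is concave on [0,1]. Let ε₁ ∈ (0,1), ε₂ ∈ (0,1), and let k ≥ 1 be an integer with ε₁·ε₂^{−k} < 1. Then ∫_0^{1−ε₁} D(q) dq ≥ k·(1−ε₂)·(1 − ε₁·ε₂^{−k}) · sup_{β ∈ [0,ε₁]} R(1−β). -/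
/-!
Concavity of `R` together with `R 0 ≥ 0` gives `x * R y ≤ R x` for `0 ≤ x ≤ y ≤ 1`; hence every
point `x` of the core `[0, 1 - ε₁]` satisfies `R x ≥ x * S`, where `S` is the tail revenue.
Cut the core at the geometric grid `q j = 1 - ε₁ / ε₂ ^ j`, `j = 0, …, k`: the piece
`[q (j + 1), q j]` has length `(1 - ε₂) * (1 - q (j + 1))`, so since `D` is nondecreasing its
integral is at least `(1 - ε₂) * R (q (j + 1)) ≥ (1 - ε₂) * q k * S`. Summing over the `k`
pieces gives the bound, because `q k = 1 - ε₁ / ε₂ ^ k`.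
-/

open Set intervalIntegral
open scoped Pointwise

theorem ConcaveOn.nonneg_of_nonneg_of_nonneg {f : ℝ → ℝ} {a b : ℝ} (hf : ConcaveOn ℝ (Icc a b) f)
    (ha : 0 ≤ f a) (hb : 0 ≤ f b) {x : ℝ} (hx : x ∈ Icc a b) : 0 ≤ f x := by
  have hab : a ≤ b := hx.1.trans hx.2
  refine (le_min ha hb).trans (hf.ge_on_segment (left_mem_Icc.2 hab) (right_mem_Icc.2 hab) ?_)
  rwa [segment_eq_Icc hab]

theorem ConcaveOn.mul_apply_le {R : ℝ → ℝ} (hR : ConcaveOn ℝ (Icc 0 1) R) (h0 : 0 ≤ R 0)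
    (h1 : 0 ≤ R 1) {x y : ℝ} (hx : 0 ≤ x) (hxy : x ≤ y) (hy : y ≤ 1) : x * R y ≤ R x := by
  have hRy : 0 ≤ R y := hR.nonneg_of_nonneg_of_nonneg h0 h1 ⟨hx.trans hxy, hy⟩
  rcases hx.eq_or_lt with rfl | hx
  · simpa using h0
  have hy0 : 0 < y := hx.trans_le hxy
  set t := x / y
  have ht1 : t ≤ 1 := div_le_one_of_le₀ hxy hy0.le
  have hconc := hR.2 (left_mem_Icc.2 zero_le_one) ⟨hy0.le, hy⟩ (sub_nonneg.2 ht1)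
    (div_nonneg hx.le hy0.le) (sub_add_cancel 1 t)
  have hpt : (1 - t) • (0 : ℝ) + t • y = x := by simp [t, hy0.ne']
  rw [hpt, smul_eq_mul, smul_eq_mul] at hconc
  have hxt : x ≤ t := le_div_self hx.le hy0 hy
  nlinarith [mul_nonneg (sub_nonneg.2 ht1) h0]

theorem ConcaveOn.mul_sSup_image_le {R : ℝ → ℝ} (hR : ConcaveOn ℝ (Icc 0 1) R) (h0 : 0 ≤ R 0)
    (h1 : 0 ≤ R 1) {ε x : ℝ} (hε : 0 ≤ ε) (hx : 0 ≤ x) (hxε : x ≤ 1 - ε) :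
    x * sSup ((fun β => R (1 - β)) '' Icc 0 ε) ≤ R x := by
  rw [← smul_eq_mul, ← Real.sSup_smul_of_nonneg hx]
  refine Real.sSup_le ?_ (hR.nonneg_of_nonneg_of_nonneg h0 h1 ⟨hx, by linarith⟩)
  rintro _ ⟨_, ⟨β, ⟨hβ0, hβε⟩, rfl⟩, rfl⟩
  exact hR.mul_apply_le h0 h1 hx (by linarith) (by linarith)

theorem MonotoneOn.sub_mul_le_integral {f : ℝ → ℝ} {a b : ℝ} (hab : a ≤ b)
    (hf : MonotoneOn f (Icc a b)) : (b - a) * f a ≤ ∫ x in a..b, f x := by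
  have hint : IntervalIntegrable f MeasureTheory.volume a b :=
    (uIcc_of_le hab ▸ hf).intervalIntegrable
  simpa using integral_mono_on hab intervalIntegrable_const hint
    fun x hx => hf (left_mem_Icc.2 hab) hx hx.1

theorem MonotoneOn.sum_sub_mul_le_integral {f : ℝ → ℝ} {q : ℕ → ℝ} (hq : Antitone q) (k : ℕ)
    (hf : MonotoneOn f (Icc (q k) (q 0))) :
    ∑ i ∈ Finset.range k, (q i - q (i + 1)) * f (q (i + 1)) ≤ ∫ x in q k..q 0, f x := by
  induction k with
  | zero => simp
  | succ k ih =>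
    have hsub : Icc (q (k + 1)) (q k) ⊆ Icc (q (k + 1)) (q 0) :=
      Icc_subset_Icc le_rfl (hq k.zero_le)
    have hsub' : Icc (q k) (q 0) ⊆ Icc (q (k + 1)) (q 0) :=
      Icc_subset_Icc (hq k.le_succ) le_rfl
    have hint : ∀ {a b}, Icc a b ⊆ Icc (q (k + 1)) (q 0) → a ≤ b →
        IntervalIntegrable f MeasureTheory.volume a b := fun hs hab =>
      (uIcc_of_le hab ▸ hf.mono hs).intervalIntegrable
    rw [Finset.sum_range_succ, ← integral_add_adjacent_intervals (hint hsub (hq k.le_succ))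
      (hint hsub' (hq k.zero_le))]
    exact (add_comm _ _).trans_le
      (add_le_add ((hf.mono hsub).sub_mul_le_integral (hq k.le_succ)) (ih (hf.mono hsub')))

theorem MonotoneOn.mul_sSup_revenue_le_integral {D : ℝ → ℝ} (hD : MonotoneOn D (Icc 0 1))
    (hD0 : ∀ q ∈ Icc (0 : ℝ) 1, 0 ≤ D q) (hconc : ConcaveOn ℝ (Icc 0 1) fun q => (1 - q) * D q)
    {ε c : ℝ} (hε : 0 ≤ ε) (hc : c ≤ 1) {q : ℕ → ℝ} (hq : Antitone q) {k : ℕ} (hqk : 0 ≤ q k)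
    (hq0 : q 0 = 1 - ε) (hgap : ∀ i, q i - q (i + 1) = (1 - c) * (1 - q (i + 1))) :
    k * (1 - c) * q k * sSup ((fun β => (1 - (1 - β)) * D (1 - β)) '' Icc 0 ε)
      ≤ ∫ x in (0 : ℝ)..(1 - ε), D x := by
  have hR0 : 0 ≤ (1 - 0) * D 0 := by simpa using hD0 0 (left_mem_Icc.2 zero_le_one)
  have hR1 : 0 ≤ (1 - 1) * D 1 := by simp
  have hcore : q k ≤ 1 - ε := hq0 ▸ hq k.zero_le
  set S := sSup ((fun β => (1 - (1 - β)) * D (1 - β)) '' Icc 0 ε)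
  have hS : 0 ≤ S := Real.sSup_nonneg <| by
    rintro _ ⟨β, hβ, rfl⟩
    exact hconc.nonneg_of_nonneg_of_nonneg hR0 hR1 ⟨by linarith [hβ.2, hcore], by linarith [hβ.1]⟩
  have hterm : ∀ i ∈ Finset.range k,
      (1 - c) * (q k * S) ≤ (q i - q (i + 1)) * D (q (i + 1)) := fun i hi => by
    have hik : q k ≤ q (i + 1) := hq (Finset.mem_range.1 hi)
    rw [hgap, mul_assoc]
    gcongr (1 - c) * ?_
    calc q k * S ≤ q (i + 1) * S := by gcongr
      _ ≤ _ := hconc.mul_sSup_image_le hR0 hR1 hε (hqk.trans hik) (hq0 ▸ hq (Nat.zero_le _))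
  calc k * (1 - c) * q k * S = ∑ i ∈ Finset.range k, (1 - c) * (q k * S) := by simp; ring
    _ ≤ ∑ i ∈ Finset.range k, (q i - q (i + 1)) * D (q (i + 1)) := Finset.sum_le_sum hterm
    _ ≤ ∫ x in q k..q 0, D x :=
      MonotoneOn.sum_sub_mul_le_integral hq k (hD.mono (Icc_subset_Icc hqk (by linarith)))
    _ ≤ ∫ x in (0 : ℝ)..(1 - ε), D x := by
      refine integral_mono_interval hqk (hq k.zero_le) hq0.le
        (MeasureTheory.ae_restrict_of_forall_mem measurableSet_Ioc
          fun x hx => hD0 x ⟨hx.1.le, by linarith [hx.2]⟩) ?_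
      refine (hD.mono ?_).intervalIntegrable
      rw [uIcc_of_le (by linarith)]
      exact Icc_subset_Icc le_rfl (by linarith)

theorem stmt_9_general (D : ℝ → ℝ) (hD : MonotoneOn D (Icc (0 : ℝ) 1))
    (hD0 : ∀ q ∈ Icc (0 : ℝ) 1, 0 ≤ D q)
    (hconc : ConcaveOn ℝ (Icc (0 : ℝ) 1) (fun q => (1 - q) * D q))
    (ε₁ ε₂ : ℝ) (hε₁ : ε₁ ∈ Ioo (0 : ℝ) 1) (hε₂ : ε₂ ∈ Ioo (0 : ℝ) 1)
    (k : ℕ) (hsmall : ε₁ / ε₂ ^ k < 1) :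
    (k : ℝ) * (1 - ε₂) * (1 - ε₁ / ε₂ ^ k) *
        sSup ((fun β => (1 - (1 - β)) * D (1 - β)) '' Icc (0 : ℝ) ε₁)
      ≤ ∫ q in (0 : ℝ)..(1 - ε₁), D q := by
  obtain ⟨hε₁0, -⟩ := hε₁
  obtain ⟨hε₂0, hε₂1⟩ := hε₂
  set q : ℕ → ℝ := fun j => 1 - ε₁ / ε₂ ^ j with hq
  have hgap : ∀ i, q i - q (i + 1) = (1 - ε₂) * (1 - q (i + 1)) := fun i => by
    simp only [hq, pow_succ]; field_simp; ring
  have hq_anti : Antitone q := antitone_nat_of_succ_le fun i => sub_nonneg.1 <| by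
    rw [hgap]; exact mul_nonneg (by linarith) (by simp only [hq, sub_sub_cancel]; positivity)
  exact hD.mul_sSup_revenue_le_integral hD0 hconc hε₁0.le hε₂1.le hq_anti
    (by simp only [hq]; linarith) (by simp [hq]) hgap

/-- **Lemma `CoreToTailRegular`.** For a nondecreasing nonnegative demand curve `D` on `[0,1]`
whose revenue curve `R(q) = (1−q)·D(q)` is concave, with `ε₁, ε₂ ∈ (0,1)`, `k ≥ 1` and
`ε₁·ε₂^{−k} < 1`, the core contribution `∫₀^{1−ε₁} D(q) dq` is at least
`k·(1−ε₂)·(1 − ε₁·ε₂^{−k})` times the tail revenue `sup_{β ∈ [0,ε₁]} R(1−β)`. -/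
theorem stmt_9 (D : ℝ → ℝ) (hD : MonotoneOn D (Icc (0 : ℝ) 1))
    (hD0 : ∀ q ∈ Icc (0 : ℝ) 1, 0 ≤ D q)
    (hconc : ConcaveOn ℝ (Icc (0 : ℝ) 1) (fun q => (1 - q) * D q))
    (ε₁ ε₂ : ℝ) (hε₁ : ε₁ ∈ Ioo (0 : ℝ) 1) (hε₂ : ε₂ ∈ Ioo (0 : ℝ) 1)
    (k : ℕ) (hk : 1 ≤ k) (hsmall : ε₁ / ε₂ ^ k < 1) :
    (k : ℝ) * (1 - ε₂) * (1 - ε₁ / ε₂ ^ k) *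
        sSup ((fun β => (1 - (1 - β)) * D (1 - β)) '' Icc (0 : ℝ) ε₁)
      ≤ ∫ q in (0 : ℝ)..(1 - ε₁), D q :=
  stmt_9_general D hD hD0 hconc ε₁ ε₂ hε₁ hε₂ k hsmall
end

section
/- Let n ≥ 1 be an integer and ε₁ ∈ (0,1] with n·ε₁ ≥ 1, and let ε₂ ∈ (0,1]. Let X = Σ_{i=1}^n B_i where B_1, …, B_n are i.i.d. Bernoulli random variables with success probability 1/(n·ε₁). Then E[ X · 1[X > (1+ε₂)/ε₁] ] ≤ (4/ε₁) · exp(−ε₂² / (8·ε₁)). -/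
open MeasureTheory ProbabilityTheory Set

/-!
Write `X = ∑ Bᵢ` and `t = (1 + ε₂)/ε₁`. If `ε₂² ≤ 8ε₁`, the right-hand side is at least
`1/ε₁ ≥ E[X]`. Otherwise put `λ = ε₂/2`. From `e·z ≤ eᶻ` one gets the pointwise bound
`x·1[x > t] ≤ (t + 1/(eλ))·e^{λ(x - t)}`, so the truncated mean is at most
`(t + 1/(eλ))·e^{-λt}·E[e^{λX}]`. By independence and `1 + y ≤ eʸ`,
`E[e^{λX}] ≤ exp((e^λ - 1)·E[X])`, and `e^λ - 1 ≤ λ + λ²` turns the exponent into `-ε₂²/(4ε₁)`.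
-/

open Real

section ZeroOne

variable {Ω : Type*} [MeasurableSpace Ω] {μ : Measure Ω}

lemma exp_mul_eq_of_zero_or_one {b : ℝ} (hb : b = 0 ∨ b = 1) (l : ℝ) :
    exp (l * b) = 1 + (exp l - 1) * b := by
  rcases hb with rfl | rfl <;> simp

lemma integrable_of_zero_or_one [IsFiniteMeasure μ] {B : Ω → ℝ} (hB : Measurable B)
    (h01 : ∀ ω, B ω = 0 ∨ B ω = 1) : Integrable B μ :=
  Integrable.of_bound hB.aestronglyMeasurable 1 <| ae_of_all _ fun ω => by
    rcases h01 ω with h | h <;> simp [h]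

lemma integrable_exp_mul_of_zero_or_one [IsFiniteMeasure μ] {B : Ω → ℝ} (hB : Measurable B)
    (h01 : ∀ ω, B ω = 0 ∨ B ω = 1) (l : ℝ) : Integrable (fun ω => exp (l * B ω)) μ := by
  simp only [exp_mul_eq_of_zero_or_one (h01 _)]
  exact (integrable_const 1).add ((integrable_of_zero_or_one hB h01).const_mul _)

lemma integral_eq_measureReal_of_zero_or_one {B : Ω → ℝ} (hB : Measurable B)
    (h01 : ∀ ω, B ω = 0 ∨ B ω = 1) : ∫ ω, B ω ∂μ = μ.real {ω | B ω = 1} := by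
  have hB_eq (ω : Ω) : B ω = {ω | B ω = 1}.indicator 1 ω := by
    rcases h01 ω with h | h <;> simp [indicator, h]
  rw [integral_congr_ae (ae_of_all _ hB_eq),
    integral_indicator_one (show MeasurableSet {ω | B ω = 1} from hB (measurableSet_singleton 1))]

lemma mgf_le_exp_integral_of_zero_or_one [IsProbabilityMeasure μ] {B : Ω → ℝ}
    (hB : Measurable B) (h01 : ∀ ω, B ω = 0 ∨ B ω = 1) (l : ℝ) :
    mgf B μ l ≤ exp ((exp l - 1) * ∫ ω, B ω ∂μ) := by
  have hmgf : mgf B μ l = 1 + (exp l - 1) * ∫ ω, B ω ∂μ := by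
    simp only [mgf, exp_mul_eq_of_zero_or_one (h01 _)]
    rw [integral_add (integrable_const 1) ((integrable_of_zero_or_one hB h01).const_mul _),
      integral_const_mul]
    simp
  rw [hmgf, add_comm]
  exact add_one_le_exp _

lemma mgf_sum_le_exp_integral {ι : Type*} {B : ι → Ω → ℝ} (hB : ∀ i, Measurable (B i))
    (h01 : ∀ i ω, B i ω = 0 ∨ B i ω = 1) (hindep : iIndepFun B μ) (s : Finset ι) (l : ℝ) :
    mgf (fun ω => ∑ i ∈ s, B i ω) μ l ≤ exp ((exp l - 1) * ∫ ω, ∑ i ∈ s, B i ω ∂μ) := by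
  have := hindep.isProbabilityMeasure
  nth_rw 1 [← Finset.sum_fn]
  rw [hindep.mgf_sum hB,
    integral_finsetSum _ fun i _ => integrable_of_zero_or_one (hB i) (h01 i), Finset.mul_sum,
    exp_sum]
  exact Finset.prod_le_prod (fun i _ => mgf_nonneg) fun i _ =>
    mgf_le_exp_integral_of_zero_or_one (hB i) (h01 i) l

end ZeroOne

section Truncation

variable {Ω : Type*} [MeasurableSpace Ω] {μ : Measure Ω} {X : Ω → ℝ} {t : ℝ}

lemma integral_ite_lt_le_integral (hX : ∀ ω, 0 ≤ X ω) (hint : Integrable X μ) :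
    ∫ ω, (if t < X ω then X ω else 0) ∂μ ≤ ∫ ω, X ω ∂μ :=
  integral_mono_of_nonneg (ae_of_all _ fun ω => show 0 ≤ ite _ _ _ by split_ifs <;> simp [hX ω])
    hint (ae_of_all _ fun ω => show ite _ _ _ ≤ _ by split_ifs <;> simp [hX ω])

lemma ite_lt_le_mul_exp {l : ℝ} (ht : 0 ≤ t) (hl : 0 < l) (x : ℝ) :
    (if t < x then x else 0) ≤ (t + 1 / (exp 1 * l)) * exp (l * (x - t)) := by
  split_ifs with hx
  · set z := l * (x - t)
    have hz : 0 ≤ z := mul_nonneg hl.le (sub_nonneg.2 hx.le)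
    have hez : exp 1 * z ≤ exp z :=
      calc exp 1 * z ≤ exp 1 * exp (z - 1) := by gcongr; linarith [add_one_le_exp (z - 1)]
        _ = exp z := by rw [← exp_add]; ring_nf
    have hxt : x - t ≤ exp z / (exp 1 * l) := by
      rw [le_div_iff₀ (by positivity)]
      linarith
    calc x = t + (x - t) := by ring
      _ ≤ t * exp z + exp z / (exp 1 * l) := by
        gcongr
        exact le_mul_of_one_le_right ht (one_le_exp hz)
      _ = (t + 1 / (exp 1 * l)) * exp z := by ring
  · positivity

lemma integral_ite_lt_le_mgf {l : ℝ} (ht : 0 ≤ t) (hl : 0 < l)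
    (hint : Integrable (fun ω => exp (l * X ω)) μ) :
    ∫ ω, (if t < X ω then X ω else 0) ∂μ ≤ (t + 1 / (exp 1 * l)) * exp (-(l * t)) * mgf X μ l := by
  have hsplit (x : ℝ) : exp (l * (x - t)) = exp (-(l * t)) * exp (l * x) := by
    rw [← exp_add]; ring_nf
  rw [mgf, mul_assoc, ← integral_const_mul, ← integral_const_mul]
  refine integral_mono_of_nonneg
    (ae_of_all _ fun ω => show 0 ≤ ite _ _ _ by split_ifs with h <;> [linarith; rfl])
    ((hint.const_mul _).const_mul _) (ae_of_all _ fun ω => ?_)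
  simpa [hsplit] using ite_lt_le_mul_exp ht hl (X ω)

end Truncation

-- `(n : ℝ) / n ≤ 1` holds at `n = 0` too, where `0 / 0 = 0`.
lemma natCast_mul_one_div_le (n : ℕ) {ε : ℝ} (hε : 0 ≤ ε) : (n : ℝ) * (1 / (n * ε)) ≤ 1 / ε := by
  rw [mul_one_div, div_mul_eq_div_div]
  exact div_le_div_of_nonneg_right (div_self_le_one _) hε

lemma one_div_le_four_div_mul_exp {ε₁ ε₂ : ℝ} (hε₁ : 0 < ε₁) (hsmall : ε₂ ^ 2 ≤ 8 * ε₁) :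
    1 / ε₁ ≤ 4 / ε₁ * exp (-(ε₂ ^ 2 / (8 * ε₁))) := by
  have hexp : 1 / 4 ≤ exp (-(ε₂ ^ 2 / (8 * ε₁))) :=
    calc (1 : ℝ) / 4 ≤ exp (-1) := by
          rw [exp_neg, one_div, inv_le_inv₀ (by norm_num) (exp_pos 1)]
          linarith [exp_one_lt_d9]
      _ ≤ exp (-(ε₂ ^ 2 / (8 * ε₁))) := by
          gcongr
          rwa [div_le_one (by positivity)]
  calc 1 / ε₁ = 4 / ε₁ * (1 / 4) := by ring
    _ ≤ 4 / ε₁ * exp (-(ε₂ ^ 2 / (8 * ε₁))) := by gcongr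

lemma chernoff_tail_le {ε₁ ε₂ m : ℝ} (hε₁ : 0 < ε₁) (hε₂0 : 0 < ε₂) (hε₂1 : ε₂ ≤ 1)
    (hlarge : 8 * ε₁ < ε₂ ^ 2) (hm : m ≤ 1 / ε₁) :
    ((1 + ε₂) / ε₁ + 1 / (exp 1 * (ε₂ / 2))) * exp (-(ε₂ / 2 * ((1 + ε₂) / ε₁)))
        * exp ((exp (ε₂ / 2) - 1) * m)
      ≤ 4 / ε₁ * exp (-(ε₂ ^ 2 / (8 * ε₁))) := by
  set l := ε₂ / 2 with hl_def
  have hl0 : 0 ≤ l := by positivity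
  have hexp : exp l - 1 ≤ l + l ^ 2 := by
    have hl1 : |l| ≤ 1 := by rw [abs_of_nonneg hl0]; linarith
    linarith [(abs_le.1 (abs_exp_sub_one_sub_id_le hl1)).2]
  have hexp0 : 0 ≤ exp l - 1 := by linarith [add_one_le_exp l]
  have hexponent : -(l * ((1 + ε₂) / ε₁)) + (exp l - 1) * m ≤ -(ε₂ ^ 2 / (4 * ε₁)) :=
    calc -(l * ((1 + ε₂) / ε₁)) + (exp l - 1) * m
        ≤ -(l * ((1 + ε₂) / ε₁)) + (exp l - 1) * (1 / ε₁) := by gcongr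
      _ ≤ -(l * ((1 + ε₂) / ε₁)) + (l + l ^ 2) * (1 / ε₁) := by gcongr
      _ = -(ε₂ ^ 2 / (4 * ε₁)) := by rw [hl_def]; field_simp; ring
  -- `ε₁ < ε₂² / 8 ≤ ε₂ / 8` makes `1/(eλ)` smaller than `1/ε₁`
  have hfactor : (1 + ε₂) / ε₁ + 1 / (exp 1 * l) ≤ 3 / ε₁ := by
    have h1 : (1 + ε₂) / ε₁ ≤ 2 / ε₁ := by gcongr; linarith
    have h2 : 1 / (exp 1 * l) ≤ 1 / ε₁ := by
      gcongr
      nlinarith [add_one_le_exp 1]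
    linarith [show 2 / ε₁ + 1 / ε₁ = 3 / ε₁ by ring]
  rw [mul_assoc, ← exp_add]
  calc ((1 + ε₂) / ε₁ + 1 / (exp 1 * l)) * exp (-(l * ((1 + ε₂) / ε₁)) + (exp l - 1) * m)
      ≤ 3 / ε₁ * exp (-(ε₂ ^ 2 / (4 * ε₁))) := by gcongr
    _ ≤ 4 / ε₁ * exp (-(ε₂ ^ 2 / (8 * ε₁))) := by gcongr <;> norm_num

theorem stmt_10_general {Ω : Type*} [MeasurableSpace Ω] (μ : Measure Ω) [IsProbabilityMeasure μ]
    (n : ℕ) (ε₁ ε₂ : ℝ) (hε₁0 : 0 < ε₁)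
    (hε₂0 : 0 < ε₂) (hε₂1 : ε₂ ≤ 1)
    (B : Fin n → Ω → ℝ) (hmeas : ∀ i, Measurable (B i))
    (h01 : ∀ i ω, B i ω = 0 ∨ B i ω = 1)
    (hindep : iIndepFun B μ)
    (hp : ∀ i, μ {ω | B i ω = 1} = ENNReal.ofReal (1 / (n * ε₁))) :
    (∫ ω, (if (1 + ε₂) / ε₁ < ∑ i, B i ω then ∑ i, B i ω else 0) ∂μ)
      ≤ 4 / ε₁ * Real.exp (-(ε₂ ^ 2 / (8 * ε₁))) := by
  have hmean : ∫ ω, ∑ i, B i ω ∂μ ≤ 1 / ε₁ := by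
    rw [integral_finsetSum _ fun i _ => integrable_of_zero_or_one (hmeas i) (h01 i)]
    simp only [integral_eq_measureReal_of_zero_or_one (hmeas _) (h01 _), measureReal_def, hp,
      ENNReal.toReal_ofReal (by positivity : (0 : ℝ) ≤ 1 / (n * ε₁)), Finset.sum_const,
      Finset.card_univ, Fintype.card_fin, nsmul_eq_mul]
    exact natCast_mul_one_div_le n hε₁0.le
  by_cases hsmall : ε₂ ^ 2 ≤ 8 * ε₁
  · have hX_nonneg (ω : Ω) : 0 ≤ ∑ i, B i ω :=
      Finset.sum_nonneg fun i _ => by rcases h01 i ω with h | h <;> simp [h]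
    calc _ ≤ ∫ ω, ∑ i, B i ω ∂μ := integral_ite_lt_le_integral hX_nonneg
          (integrable_finsetSum _ fun i _ => integrable_of_zero_or_one (hmeas i) (h01 i))
      _ ≤ 1 / ε₁ := hmean
      _ ≤ _ := one_div_le_four_div_mul_exp hε₁0 hsmall
  · have hX_exp : Integrable (fun ω => exp (ε₂ / 2 * ∑ i, B i ω)) μ := by
      simpa using hindep.integrable_exp_mul_sum hmeas (s := Finset.univ) fun i _ =>
        integrable_exp_mul_of_zero_or_one (hmeas i) (h01 i) _
    calc _ ≤ _ := integral_ite_lt_le_mgf (by positivity) (by positivity) hX_exp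
      _ ≤ _ := by gcongr; exact mgf_sum_le_exp_integral hmeas h01 hindep _ _
      _ ≤ _ := chernoff_tail_le hε₁0 hε₂0 hε₂1 (not_le.1 hsmall) hmean

/-- **Lemma `ManyBuyersAjLarge` (Tail 2).** For `X` a sum of `n` i.i.d. Bernoulli variables
with success probability `1/(n·ε₁)` (so `E[X] = 1/ε₁`), the contribution to `E[X]` from
realizations exceeding `(1+ε₂)/ε₁` is at most `(4/ε₁)·exp(−ε₂²/(8·ε₁))`. -/
theorem stmt_10 {Ω : Type*} [MeasurableSpace Ω] (μ : Measure Ω) [IsProbabilityMeasure μ]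
    (n : ℕ) (hn : 1 ≤ n) (ε₁ ε₂ : ℝ) (hε₁0 : 0 < ε₁) (hε₁1 : ε₁ ≤ 1)
    (hnε₁ : 1 ≤ (n : ℝ) * ε₁) (hε₂0 : 0 < ε₂) (hε₂1 : ε₂ ≤ 1)
    (B : Fin n → Ω → ℝ) (hmeas : ∀ i, Measurable (B i))
    (h01 : ∀ i ω, B i ω = 0 ∨ B i ω = 1)
    (hindep : iIndepFun B μ)
    (hp : ∀ i, μ {ω | B i ω = 1} = ENNReal.ofReal (1 / (n * ε₁))) :
    (∫ ω, (if (1 + ε₂) / ε₁ < ∑ i, B i ω then ∑ i, B i ω else 0) ∂μ)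
      ≤ 4 / ε₁ * Real.exp (-(ε₂ ^ 2 / (8 * ε₁))) :=
  stmt_10_general μ n ε₁ ε₂ hε₁0 hε₂0 hε₂1 B hmeas h01 hindep hp
end

section
/- Let w¹, …, w^n be i.i.d. nonnegative real random variables with w¹ ≤ T almost surely (T > 0), let w* = max_{1≤i≤n} w^i, let 0 < t ≤ T, and let r := sup_{y ≥ t} y·Pr[w¹ > y]. Then E[ w* · 1[w* > t] ] ≤ n · (1 + ln(T/t)) · r. -/
open MeasureTheory ProbabilityTheory Set

/-!
Layer cake: `E[w*·1[w* > t]] = t·Pr[w* > t] + ∫_t^T Pr[w* > y] dy`, since `w* ≤ T` a.s.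
The union bound and identical distribution give `Pr[w* > y] ≤ n·Pr[w¹ > y]`, and for `y ≥ t`
the definition of `r` gives `Pr[w¹ > y] ≤ r / y`. Hence the first term is at most `n·r` and the
integral at most `n·r·∫_t^T dy/y = n·r·ln(T/t)`.
-/

section TailFunction

variable {Ω : Type*} [MeasurableSpace Ω] {μ : Measure Ω}

lemma antitone_measureReal_lt [IsFiniteMeasure μ] (X : Ω → ℝ) :
    Antitone fun y => μ.real {ω | y < X ω} :=
  fun _ _ hyz => measureReal_mono fun _ h => hyz.trans_lt h

lemma measureReal_lt_ciSup_le_sum [IsFiniteMeasure μ] {ι : Type*} [Fintype ι] [Nonempty ι]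
    (f : ι → Ω → ℝ) (y : ℝ) :
    μ.real {ω | y < ⨆ i, f i ω} ≤ ∑ i, μ.real {ω | y < f i ω} := by
  have hsub : {ω | y < ⨆ i, f i ω} ⊆ ⋃ i, {ω | y < f i ω} := fun ω hω =>
    mem_iUnion.2 (exists_lt_of_lt_ciSup (f := fun i => f i ω) hω)
  exact (measureReal_mono hsub).trans (measureReal_iUnion_fintype_le _)

lemma measureReal_lt_ciSup_le_card_mul [IsFiniteMeasure μ] {ι : Type*} [Fintype ι]
    {f : ι → Ω → ℝ} {i₀ : ι} (hid : ∀ i, IdentDistrib (f i) (f i₀) μ μ) (y : ℝ) :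
    μ.real {ω | y < ⨆ i, f i ω} ≤ Fintype.card ι * μ.real {ω | y < f i₀ ω} := by
  have : Nonempty ι := ⟨i₀⟩
  have hsame (i : ι) : μ.real {ω | y < f i ω} = μ.real {ω | y < f i₀ ω} :=
    congrArg ENNReal.toReal ((hid i).measure_mem_eq (s := Ioi y) measurableSet_Ioi)
  calc μ.real {ω | y < ⨆ i, f i ω} ≤ ∑ i, μ.real {ω | y < f i ω} :=
        measureReal_lt_ciSup_le_sum f y
    _ = Fintype.card ι * μ.real {ω | y < f i₀ ω} := by
        simp only [hsame, Finset.sum_const, Finset.card_univ, nsmul_eq_mul]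

end TailFunction

section LayerCake

variable {Ω : Type*} {X : Ω → ℝ} {t y : ℝ}

lemma setOf_lt_ite_lt_eq_of_le (hy : 0 ≤ y) (hyt : y ≤ t) :
    {ω | y < if t < X ω then X ω else 0} = {ω | t < X ω} := by
  ext ω
  by_cases h : t < X ω
  · simp [h, hyt.trans_lt h]
  · simp [h, hy.not_gt]

lemma setOf_lt_ite_lt_eq_of_ge (ht : 0 ≤ t) (hty : t ≤ y) :
    {ω | y < if t < X ω then X ω else 0} = {ω | y < X ω} := by
  ext ω
  by_cases h : t < X ω
  · simp [h]
  · have : ¬y < X ω := fun h' => h (hty.trans_lt h')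
    simp [h, this, (ht.trans hty).not_gt]

variable [MeasurableSpace Ω] {μ : Measure Ω}

theorem integral_ite_lt_eq [IsFiniteMeasure μ] {T : ℝ} (hX : Measurable X)
    (hXT : ∀ᵐ ω ∂μ, X ω ≤ T) (ht : 0 < t) (htT : t ≤ T) :
    ∫ ω, (if t < X ω then X ω else 0) ∂μ
      = t * μ.real {ω | t < X ω} + ∫ y in t..T, μ.real {ω | y < X ω} := by
  set g : Ω → ℝ := fun ω => if t < X ω then X ω else 0
  set F : ℝ → ℝ := fun y => μ.real {ω | y < g ω}
  have hg_nonneg (ω : Ω) : 0 ≤ g ω := by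
    by_cases h : t < X ω
    · simp [g, h, (ht.trans h).le]
    · simp [g, h]
  have hg_int : Integrable g μ := by
    refine .of_bound (Measurable.ite (measurableSet_lt measurable_const hX) hX
      measurable_const).aestronglyMeasurable T ?_
    filter_upwards [hXT] with ω hω
    by_cases h : t < X ω
    · simp [g, h, hω, abs_of_pos (ht.trans h)]
    · simp [g, h, (ht.trans_le htT).le]
  have hF_int {a b : ℝ} : IntervalIntegrable F volume a b :=
    (antitone_measureReal_lt g).intervalIntegrable
  have hF_null (y : ℝ) (hy : y ∈ Ioi 0 \ Ioc 0 T) : F y = 0 := by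
    have hTy : T < y := not_le.1 fun h => hy.2 ⟨hy.1, h⟩
    simp only [F, g, setOf_lt_ite_lt_eq_of_ge ht.le (htT.trans hTy.le)]
    rw [measureReal_eq_zero_iff]
    exact measure_mono_null (fun ω h => not_le.2 (hTy.trans h)) (ae_iff.1 hXT)
  have hF_below : EqOn F (fun _ => μ.real {ω | t < X ω}) (uIcc 0 t) := fun y hy => by
    rw [uIcc_of_le ht.le] at hy
    simp only [F, g, setOf_lt_ite_lt_eq_of_le hy.1 hy.2]
  have hF_above : EqOn F (fun y => μ.real {ω | y < X ω}) (uIcc t T) := fun y hy => by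
    rw [uIcc_of_le htT] at hy
    simp only [F, g, setOf_lt_ite_lt_eq_of_ge ht.le hy.1]
  calc ∫ ω, g ω ∂μ = ∫ y in Ioi 0, F y :=
        hg_int.integral_eq_integral_meas_lt (.of_forall hg_nonneg)
    _ = ∫ y in 0..T, F y := by
        rw [intervalIntegral.integral_of_le (ht.trans_le htT).le]
        exact setIntegral_eq_of_subset_of_forall_sdiff_eq_zero measurableSet_Ioi
          Ioc_subset_Ioi_self hF_null
    _ = (∫ y in 0..t, F y) + ∫ y in t..T, F y :=
        (intervalIntegral.integral_add_adjacent_intervals hF_int hF_int).symm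
    _ = t * μ.real {ω | t < X ω} + ∫ y in t..T, μ.real {ω | y < X ω} := by
        rw [intervalIntegral.integral_congr hF_below, intervalIntegral.integral_congr hF_above]
        simp

end LayerCake

lemma intervalIntegral_le_mul_log_of_mul_le {f : ℝ → ℝ} {t T C : ℝ}
    (hf : IntervalIntegrable f volume t T) (ht : 0 < t) (htT : t ≤ T)
    (hfC : ∀ y ∈ Icc t T, y * f y ≤ C) :
    ∫ y in t..T, f y ≤ C * Real.log (T / t) := by
  have hzero : (0 : ℝ) ∉ uIcc t T := fun h => by
    rw [uIcc_of_le htT] at h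
    exact ht.not_ge h.1
  have hinv : IntervalIntegrable (fun y => C * y⁻¹) volume t T :=
    (intervalIntegrable_inv_iff.2 (.inr hzero)).const_mul C
  calc ∫ y in t..T, f y ≤ ∫ y in t..T, C * y⁻¹ := by
        refine intervalIntegral.integral_mono_on htT hf hinv fun y hy => ?_
        rw [← div_eq_mul_inv, le_div_iff₀ (ht.trans_le hy.1), mul_comm]
        exact hfC y hy
    _ = C * Real.log (T / t) := by
        rw [intervalIntegral.integral_const_mul, integral_inv_of_pos ht (ht.trans_le htT)]

theorem stmt_13_general {Ω : Type*} [MeasurableSpace Ω] (μ : Measure Ω) [IsProbabilityMeasure μ]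
    (n : ℕ) (hn : 0 < n) (T t : ℝ) (ht0 : 0 < t) (htT : t ≤ T)
    (w : Fin n → Ω → ℝ) (hmeas : ∀ i, Measurable (w i))
    (hbdd : ∀ i, ∀ᵐ ω ∂μ, w i ω ≤ T)
    (hid : ∀ i, IdentDistrib (w i) (w ⟨0, hn⟩) μ μ)
    (r : ℝ)
    (hr : IsLUB {x | ∃ y, t ≤ y ∧ x = y * (μ {ω | y < w ⟨0, hn⟩ ω}).toReal} r) :
    (∫ ω, (if t < ⨆ i, w i ω then (⨆ i, w i ω) else 0) ∂μ)
      ≤ n * (1 + Real.log (T / t)) * r := by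
  have hmax_le : ∀ᵐ ω ∂μ, ⨆ i, w i ω ≤ T := by
    have : Nonempty (Fin n) := ⟨⟨0, hn⟩⟩
    filter_upwards [ae_all_iff.2 hbdd] with ω hω using ciSup_le hω
  have hrevenue (y : ℝ) (hy : t ≤ y) : y * μ.real {ω | y < ⨆ i, w i ω} ≤ n * r :=
    calc y * μ.real {ω | y < ⨆ i, w i ω} ≤ y * (n * μ.real {ω | y < w ⟨0, hn⟩ ω}) := by
          gcongr
          · exact ht0.le.trans hy
          · simpa using measureReal_lt_ciSup_le_card_mul hid y
      _ = n * (y * μ.real {ω | y < w ⟨0, hn⟩ ω}) := by ring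
      _ ≤ n * r := by gcongr; exact hr.1 ⟨y, hy, rfl⟩
  have hintegral := intervalIntegral_le_mul_log_of_mul_le
    (antitone_measureReal_lt _).intervalIntegrable ht0 htT fun y hy => hrevenue y hy.1
  rw [integral_ite_lt_eq (Measurable.iSup hmeas) hmax_le ht0 htT]
  linarith [hrevenue t le_rfl]

/-- **Lemma `HigherQuantileBoundManyBuyers` (distilled).** For `n` i.i.d. nonnegative values
bounded by `T` a.s., with `w* = max_i wⁱ`, a cutoff `0 < t ≤ T`, and `r` the (finite) best
single-buyer posted-price revenue using prices at least `t`, one has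
`E[w*·1[w* > t]] ≤ n·(1 + ln(T/t))·r`. -/
theorem stmt_13 {Ω : Type*} [MeasurableSpace Ω] (μ : Measure Ω) [IsProbabilityMeasure μ]
    (n : ℕ) (hn : 0 < n) (T t : ℝ) (hT : 0 < T) (ht0 : 0 < t) (htT : t ≤ T)
    (w : Fin n → Ω → ℝ) (hmeas : ∀ i, Measurable (w i))
    (h0 : ∀ i ω, 0 ≤ w i ω)
    (hbdd : ∀ i, ∀ᵐ ω ∂μ, w i ω ≤ T)
    (hindep : iIndepFun w μ)
    (hid : ∀ i, IdentDistrib (w i) (w ⟨0, hn⟩) μ μ)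
    (r : ℝ)
    (hr : IsLUB {x | ∃ y, t ≤ y ∧ x = y * (μ {ω | y < w ⟨0, hn⟩ ω}).toReal} r) :
    (∫ ω, (if t < ⨆ i, w i ω then (⨆ i, w i ω) else 0) ∂μ)
      ≤ n * (1 + Real.log (T / t)) * r :=
  stmt_13_general μ n hn T t ht0 htT w hmeas hbdd hid r hr
end

section
/- Let v_1, …, v_k be independent nonnegative real random variables, let t_1, …, t_k be reals with 0 ≤ t_j ≤ T for all j, and set r_j := sup_{p>0} p·Pr[v_j > p] (assumed finite). Then Var( Σ_{j=1}^k v_j · 1[v_j ≤ t_j] ) ≤ 2·T · Σ_{j=1}^k r_j. -/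
/-!
Each truncated value `X_j = v_j·1[v_j ≤ t_j]` lies in `[0, t_j]` and its tails are dominated by
those of `v_j`, so `Pr[X_j > p] ≤ r_j / p`. By the layer cake formula
`E[X_j²] = ∫₀^{t_j} 2p·Pr[X_j > p] dp ≤ 2 t_j r_j`, which bounds `Var X_j`. The truncated
values are independent, so their variances add up.
-/

open MeasureTheory ProbabilityTheory Set

section TailBound

variable {Ω : Type*} [MeasurableSpace Ω] {μ : Measure Ω} {X : Ω → ℝ} {t r : ℝ}

lemma lintegral_sq_eq_lintegral_meas_lt_mul (hX0 : 0 ≤ᵐ[μ] X) (hX : AEMeasurable X μ) :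
    ∫⁻ ω, ENNReal.ofReal (X ω ^ 2) ∂μ
      = ∫⁻ p in Ioi 0, μ {ω | p < X ω} * ENNReal.ofReal (2 * p) := by
  rw [← lintegral_comp_eq_lintegral_meas_lt_mul μ hX0 hX (g := fun p => 2 * p)
    (fun p _ => (continuous_const_mul 2).intervalIntegrable 0 p)
    ((ae_restrict_mem measurableSet_Ioi).mono fun p (hp : 0 < p) => by positivity)]
  congr! 3 with ω
  rw [intervalIntegral.integral_const_mul, integral_id]
  ring

lemma nonneg_of_mul_meas_lt_le (hr : ∀ p, 0 < p → p * (μ {ω | p < X ω}).toReal ≤ r) : 0 ≤ r :=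
  (hr 1 one_pos).trans' (by positivity)

lemma setLIntegral_meas_lt_mul_le [IsFiniteMeasure μ] (hXt : ∀ᵐ ω ∂μ, X ω ≤ t)
    (hr : ∀ p, 0 < p → p * (μ {ω | p < X ω}).toReal ≤ r) :
    ∫⁻ p in Ioi 0, μ {ω | p < X ω} * ENNReal.ofReal (2 * p) ≤ ENNReal.ofReal (2 * t * r) := by
  have hr0 := nonneg_of_mul_meas_lt_le hr
  have htail : ∀ p ∈ Ioi (0 : ℝ), μ {ω | p < X ω} * ENNReal.ofReal (2 * p)
      ≤ (Iic t).indicator (fun _ => ENNReal.ofReal (2 * r)) p := by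
    intro p (hp : 0 < p)
    by_cases hpt : p ≤ t
    · rw [indicator_of_mem (show p ∈ Iic t from hpt),
        ENNReal.le_ofReal_iff_toReal_le (by finiteness) (by positivity), ENNReal.toReal_mul, ENNReal.toReal_ofReal (by positivity)]
      linarith [hr p hp]
    · have hnull : μ {ω | p < X ω} = 0 :=
        measure_mono_null (fun ω (hω : p < X ω) (hle : X ω ≤ t) => hpt (hω.le.trans hle))
          (measure_eq_zero_iff_ae_notMem.mpr (hXt.mono fun ω h hω => hω h))
      simp [hnull]
  calc ∫⁻ p in Ioi 0, μ {ω | p < X ω} * ENNReal.ofReal (2 * p)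
      ≤ ∫⁻ p in Ioi 0, (Iic t).indicator (fun _ => ENNReal.ofReal (2 * r)) p :=
        setLIntegral_mono' measurableSet_Ioi htail
    _ = ENNReal.ofReal (2 * t * r) := by
        rw [lintegral_indicator_const measurableSet_Iic,
          Measure.restrict_apply measurableSet_Iic, Iic_inter_Ioi, Real.volume_Ioc, sub_zero,
          ← ENNReal.ofReal_mul (by positivity)]
        ring_nf

lemma variance_le_two_mul_of_meas_lt_le [IsProbabilityMeasure μ] (hX : AEMeasurable X μ)
    (hX0 : 0 ≤ᵐ[μ] X) (hXt : ∀ᵐ ω ∂μ, X ω ≤ t) (ht : 0 ≤ t)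
    (hr : ∀ p, 0 < p → p * (μ {ω | p < X ω}).toReal ≤ r) :
    variance X μ ≤ 2 * t * r := by
  have hX2 : 0 ≤ᵐ[μ] X ^ 2 := Filter.Eventually.of_forall fun ω => sq_nonneg (X ω)
  calc variance X μ ≤ μ[X ^ 2] := variance_le_expectation_sq hX.aestronglyMeasurable
    _ = (∫⁻ ω, ENNReal.ofReal (X ω ^ 2) ∂μ).toReal :=
        integral_eq_lintegral_of_nonneg_ae hX2 (hX.pow_const 2).aestronglyMeasurable
    _ ≤ (ENNReal.ofReal (2 * t * r)).toReal := by
        rw [lintegral_sq_eq_lintegral_meas_lt_mul hX0 hX]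
        exact ENNReal.toReal_mono ENNReal.ofReal_ne_top (setLIntegral_meas_lt_mul_le hXt hr)
    _ = 2 * t * r := by
        have hr0 := nonneg_of_mul_meas_lt_le hr
        exact ENNReal.toReal_ofReal (by positivity)

end TailBound

section Core

noncomputable def core (t x : ℝ) : ℝ := if x ≤ t then x else 0

variable {t x : ℝ}

lemma measurable_core (t : ℝ) : Measurable (core t) :=
  Measurable.ite (measurableSet_le measurable_id measurable_const) measurable_id measurable_const

lemma core_nonneg (hx : 0 ≤ x) : 0 ≤ core t x := by
  unfold core; split_ifs <;> simp [hx]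

lemma core_le (ht : 0 ≤ t) : core t x ≤ t := by
  unfold core; split_ifs with h <;> simp [h, ht]

lemma core_le_self (hx : 0 ≤ x) : core t x ≤ x := by
  unfold core; split_ifs <;> simp [hx]

lemma variance_core_comp_le {Ω : Type*} [MeasurableSpace Ω] {μ : Measure Ω}
    [IsProbabilityMeasure μ] {v : Ω → ℝ} {r : ℝ} (hv : AEMeasurable v μ) (hv0 : ∀ ω, 0 ≤ v ω)
    (ht : 0 ≤ t) (hr : ∀ p, 0 < p → p * (μ {ω | p < v ω}).toReal ≤ r) :
    variance (fun ω => core t (v ω)) μ ≤ 2 * t * r := by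
  refine variance_le_two_mul_of_meas_lt_le ((measurable_core t).comp_aemeasurable hv)
    (Filter.Eventually.of_forall fun ω => core_nonneg (hv0 ω))
    (Filter.Eventually.of_forall fun ω => core_le ht) ht fun p hp => (hr p hp).trans' ?_
  gcongr
  · finiteness
  · exact core_le_self (hv0 _)

end Core

/-- **Variance bound on the sum of core values (inequality (varBound)).** For independent
nonnegative values `v_j` with cutoffs `0 ≤ t_j ≤ T` and finite posted-price revenues
`r_j = sup_{p>0} p·Pr[v_j > p]`, the variance of `Σ_j v_j·1[v_j ≤ t_j]` is at most
`2·T·Σ_j r_j`. -/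
theorem stmt_17 {Ω : Type*} [MeasurableSpace Ω] (μ : Measure Ω) [IsProbabilityMeasure μ]
    (k : ℕ) (v : Fin k → Ω → ℝ) (hmeas : ∀ j, Measurable (v j))
    (h0 : ∀ j ω, 0 ≤ v j ω)
    (hindep : iIndepFun v μ)
    (T : ℝ) (t : Fin k → ℝ) (ht0 : ∀ j, 0 ≤ t j) (htT : ∀ j, t j ≤ T)
    (r : Fin k → ℝ)
    (hr : ∀ j, IsLUB {x | ∃ p, 0 < p ∧ x = p * (μ {ω | p < v j ω}).toReal} (r j)) :
    variance (fun ω => ∑ j, if v j ω ≤ t j then v j ω else 0) μ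
      ≤ 2 * T * ∑ j, r j := by
  have htail : ∀ j p, 0 < p → p * (μ {ω | p < v j ω}).toReal ≤ r j :=
    fun j p hp => (hr j).1 ⟨p, hp, rfl⟩
  have hcore_indep : iIndepFun (fun j => core (t j) ∘ v j) μ :=
    hindep.comp _ fun j => measurable_core (t j)
  have hcore_memLp : ∀ j, MemLp (core (t j) ∘ v j) 2 μ := fun j =>
    MemLp.of_bound ((measurable_core _).comp (hmeas j)).aestronglyMeasurable (t j)
      (Filter.Eventually.of_forall fun ω => by
        simpa [abs_of_nonneg (core_nonneg (h0 j ω))] using core_le (ht0 j))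
  have hsum : (fun ω => ∑ j, if v j ω ≤ t j then v j ω else 0) = ∑ j, core (t j) ∘ v j := by
    ext ω
    simp [core]
  rw [hsum, IndepFun.variance_sum (fun j _ => hcore_memLp j)
    (fun i _ j _ hij => hcore_indep.indepFun hij), Finset.mul_sum]
  gcongr with j
  have hr0 := nonneg_of_mul_meas_lt_le (htail j)
  calc variance (core (t j) ∘ v j) μ ≤ 2 * t j * r j :=
        variance_core_comp_le (hmeas j).aemeasurable (h0 j) (ht0 j) (htail j)
    _ ≤ 2 * T * r j := by gcongr; exact htT j
end

section
/- Let M > 1 and let v be a random variable with the equal-revenue distribution on [1, M], i.e., Pr[v ≤ x] = 0 for x < 1, Pr[v ≤ x] = 1 − 1/x for 1 ≤ x < M, and Pr[v ≤ M] = 1 (so v has an atom of mass 1/M at M). Then for every real a with 1 ≤ a ≤ M: E[v | v ≥ a] = a·(ln(M/a) + 1), and Var(v | v ≥ a) ≤ a²·(ln(M/a))² + 2·M·a. -/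
/-
Pushing the conditional law forward along `v`, everything reduces to the law of `v`, which the
CDF identifies as density `x⁻²` on `[1, M)` plus an atom `1/M` at `M`. Its restriction to
`[a, ∞)` has the same shape with total mass `1/a`, so conditioning on `v ≥ a` multiplies by `a`:
`E[g(v) | v ≥ a] = a (∫ₐᴹ g(x)/x² dx + g(M)/M)`. For `g(x) = x` this is `a (ln(M/a) + 1)`; for
`g(x) = x²` it is `a (2M - a)`, which already bounds the variance.
-/

open MeasureTheory ProbabilityTheory Set

theorem lintegral_inv_sq_Ico {c d : ℝ} (hc : 0 < c) (hcd : c ≤ d) :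
    ∫⁻ x in Ico c d, ENNReal.ofReal (x ^ 2)⁻¹ = ENNReal.ofReal (c⁻¹ - d⁻¹) := by
  have hcont : ContinuousOn (fun x : ℝ => (x ^ 2)⁻¹) (Icc c d) :=
    (continuousOn_pow 2).inv₀ fun x hx => by have := hc.trans_le hx.1; positivity
  have hFTC : ∫ x in c..d, (x ^ 2)⁻¹ = c⁻¹ - d⁻¹ := by
    rw [intervalIntegral.integral_eq_sub_of_hasDerivAt (f := fun x => -x⁻¹)]
    · ring
    · intro x hx
      rw [uIcc_of_le hcd] at hx
      have hderiv := (hasDerivAt_inv (hc.trans_le hx.1).ne').neg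
      rw [neg_neg] at hderiv
      exact hderiv
    · exact hcont.intervalIntegrable_of_Icc hcd
  rw [← ofReal_integral_eq_lintegral_ofReal, integral_Ico_eq_integral_Ioc,
    ← intervalIntegral.integral_of_le hcd, hFTC]
  · exact hcont.integrableOn_Icc.mono_set Ico_subset_Icc_self
  · exact Filter.Eventually.of_forall fun x => by positivity

theorem map_cond_preimage {Ω α : Type*} [MeasurableSpace Ω] [MeasurableSpace α] {μ : Measure Ω}
    {X : Ω → α} (hX : Measurable X) {t : Set α} (ht : MeasurableSet t) :
    μ[|X ⁻¹' t].map X = (μ.map X)[|t] := by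
  rw [ProbabilityTheory.cond, ProbabilityTheory.cond, Measure.map_smul,
    ← Measure.restrict_map hX ht, Measure.map_apply hX ht]

namespace EqualRevenue

/-- `tail 1 M` is the equal-revenue law on `[1, M]`: density `x⁻²` on `[1, M)` and an atom `1/M`
at `M`. For `1 ≤ a ≤ M`, `tail a M` is its restriction to `[a, ∞)`. -/
noncomputable def tail (a M : ℝ) : Measure ℝ :=
  (volume.restrict (Ico a M)).withDensity (fun x => ENNReal.ofReal (x ^ 2)⁻¹)
    + ENNReal.ofReal M⁻¹ • Measure.dirac M

variable {a b M x : ℝ}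

theorem tail_apply {s : Set ℝ} (hs : MeasurableSet s) :
    tail a M s = (∫⁻ x in s ∩ Ico a M, ENNReal.ofReal (x ^ 2)⁻¹)
      + ENNReal.ofReal M⁻¹ * s.indicator 1 M := by
  rw [tail, Measure.add_apply, withDensity_apply _ hs, Measure.restrict_restrict hs,
    Measure.smul_apply, Measure.dirac_apply' _ hs, smul_eq_mul]

theorem tail_apply_of_Icc_subset (ha : 0 < a) (haM : a ≤ M) {s : Set ℝ} (hs : MeasurableSet s)
    (hsub : Icc a M ⊆ s) : tail a M s = ENNReal.ofReal a⁻¹ := by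
  rw [tail_apply hs, inter_eq_right.2 (Ico_subset_Icc_self.trans hsub),
    lintegral_inv_sq_Ico ha haM, indicator_of_mem (hsub (right_mem_Icc.2 haM)), Pi.one_apply,
    mul_one, ← ENNReal.ofReal_add (sub_nonneg.2 (inv_anti₀ ha haM))
      (inv_nonneg.2 (ha.le.trans haM)), sub_add_cancel]

theorem tail_univ (ha : 0 < a) (haM : a ≤ M) : tail a M univ = ENNReal.ofReal a⁻¹ :=
  tail_apply_of_Icc_subset ha haM MeasurableSet.univ (subset_univ _)

theorem tail_Iic_of_lt (haM : a ≤ M) (hx : x < a) : tail a M (Iic x) = 0 := by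
  have hdisj : Iic x ∩ Ico a M = ∅ :=
    eq_empty_of_forall_notMem fun y hy => (hy.1.trans_lt hx).not_ge hy.2.1
  rw [tail_apply measurableSet_Iic, hdisj, indicator_of_notMem (by simpa using hx.trans_le haM)]
  simp

theorem tail_Iic_of_le_of_lt (ha : 0 < a) (hax : a ≤ x) (hxM : x < M) :
    tail a M (Iic x) = ENNReal.ofReal (a⁻¹ - x⁻¹) := by
  have hinter : Iic x ∩ Ico a M = Icc a x := by
    ext y
    simp only [mem_inter_iff, mem_Iic, mem_Ico, mem_Icc]
    constructor
    · rintro ⟨hyx, hay, -⟩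
      exact ⟨hay, hyx⟩
    · rintro ⟨hay, hyx⟩
      exact ⟨hyx, hay, hyx.trans_lt hxM⟩
  rw [tail_apply measurableSet_Iic, hinter, ← setLIntegral_congr Ico_ae_eq_Icc,
    lintegral_inv_sq_Ico ha hax, indicator_of_notMem (by simpa using hxM)]
  simp

theorem tail_Iic_of_le (ha : 0 < a) (haM : a ≤ M) (hMx : M ≤ x) :
    tail a M (Iic x) = ENNReal.ofReal a⁻¹ :=
  tail_apply_of_Icc_subset ha haM measurableSet_Iic fun _ hy => hy.2.trans hMx

theorem restrict_Ici_tail (hba : b ≤ a) (haM : a ≤ M) :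
    (tail b M).restrict (Ici a) = tail a M := by
  have hinter : Ici a ∩ Ico b M = Ico a M := by
    rw [inter_comm, ← Ici_inter_Iio, ← Ici_inter_Iio, inter_right_comm, Ici_inter_Ici,
      max_eq_right hba]
  classical
  rw [tail, Measure.restrict_add, restrict_withDensity measurableSet_Ici,
    Measure.restrict_restrict measurableSet_Ici, hinter, Measure.restrict_smul,
    restrict_dirac' measurableSet_Ici, if_pos (show M ∈ Ici a from haM), tail]

theorem cond_tail_Ici (ha : 0 < a) (hba : b ≤ a) (haM : a ≤ M) :
    (tail b M)[|Ici a] = ENNReal.ofReal a • tail a M := by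
  rw [ProbabilityTheory.cond, ← Measure.restrict_apply_univ, restrict_Ici_tail hba haM,
    tail_univ ha haM, ← ENNReal.ofReal_inv_of_pos (inv_pos.2 ha), inv_inv]

theorem isProbabilityMeasure_cond_tail_Ici (ha : 0 < a) (hba : b ≤ a) (haM : a ≤ M) :
    IsProbabilityMeasure (tail b M)[|Ici a] := by
  constructor
  rw [cond_tail_Ici ha hba haM, Measure.smul_apply, tail_univ ha haM, smul_eq_mul,
    ← ENNReal.ofReal_mul ha.le, mul_inv_cancel₀ ha.ne', ENNReal.ofReal_one]

theorem integral_tail (ha : 0 < a) (haM : a ≤ M) {g : ℝ → ℝ} (hg : ContinuousOn g (Icc a M)) :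
    ∫ x, g x ∂tail a M = (∫ x in a..M, g x / x ^ 2) + g M / M := by
  have hdens_meas : Measurable fun x : ℝ => ENNReal.ofReal (x ^ 2)⁻¹ := by fun_prop
  have hdens_fin : ∀ᵐ x : ℝ ∂volume.restrict (Ico a M), ENNReal.ofReal (x ^ 2)⁻¹ < ⊤ :=
    Filter.Eventually.of_forall fun _ => ENNReal.ofReal_lt_top
  have hsmul : (fun x => (ENNReal.ofReal (x ^ 2)⁻¹).toReal • g x) = fun x => g x / x ^ 2 := by
    ext x
    rw [ENNReal.toReal_ofReal (by positivity), smul_eq_mul, div_eq_inv_mul]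
  have hcont : ContinuousOn (fun x => g x / x ^ 2) (Icc a M) :=
    hg.div (continuousOn_pow 2) fun x hx => by
      have := ha.trans_le hx.1; positivity
  have hint_dens : Integrable g ((volume.restrict (Ico a M)).withDensity
      fun x => ENNReal.ofReal (x ^ 2)⁻¹) := by
    rw [integrable_withDensity_iff_integrable_smul' hdens_meas hdens_fin, hsmul]
    exact hcont.integrableOn_Icc.mono_set Ico_subset_Icc_self
  have hint_atom : Integrable g (ENNReal.ofReal M⁻¹ • Measure.dirac M) :=
    (integrable_dirac enorm_lt_top).smul_measure ENNReal.ofReal_ne_top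
  rw [tail, integral_add_measure hint_dens hint_atom,
    integral_withDensity_eq_integral_toReal_smul hdens_meas hdens_fin, hsmul,
    integral_smul_measure, integral_dirac, integral_Ico_eq_integral_Ioc,
    ← intervalIntegral.integral_of_le haM,
    ENNReal.toReal_ofReal (inv_nonneg.2 (ha.le.trans haM)), smul_eq_mul, inv_mul_eq_div]

theorem integral_cond_tail_Ici (ha : 0 < a) (hba : b ≤ a) (haM : a ≤ M) {g : ℝ → ℝ}
    (hg : ContinuousOn g (Icc a M)) :
    ∫ x, g x ∂(tail b M)[|Ici a] = a * ((∫ x in a..M, g x / x ^ 2) + g M / M) := by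
  rw [cond_tail_Ici ha hba haM, integral_smul_measure, integral_tail ha haM hg,
    ENNReal.toReal_ofReal ha.le, smul_eq_mul]

theorem integral_id_cond_tail_Ici (ha : 0 < a) (hba : b ≤ a) (haM : a ≤ M) :
    ∫ x, x ∂(tail b M)[|Ici a] = a * (Real.log (M / a) + 1) := by
  have hM : 0 < M := ha.trans_le haM
  have hinv : ∫ x in a..M, x / x ^ 2 = ∫ x in a..M, x⁻¹ :=
    intervalIntegral.integral_congr fun x hx => by
      rw [uIcc_of_le haM] at hx
      have := ha.trans_le hx.1
      field_simp
  rw [integral_cond_tail_Ici ha hba haM (g := fun x => x) continuousOn_id, hinv,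
    integral_inv_of_pos ha hM, div_self hM.ne']

theorem integral_sq_cond_tail_Ici (ha : 0 < a) (hba : b ≤ a) (haM : a ≤ M) :
    ∫ x, x ^ 2 ∂(tail b M)[|Ici a] = a * (2 * M - a) := by
  have hM : 0 < M := ha.trans_le haM
  have hone : ∫ x in a..M, x ^ 2 / x ^ 2 = ∫ _ in a..M, (1 : ℝ) :=
    intervalIntegral.integral_congr fun x hx => by
      rw [uIcc_of_le haM] at hx
      have := ha.trans_le hx.1
      exact div_self (by positivity)
  rw [integral_cond_tail_Ici ha hba haM (continuousOn_pow 2), hone,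
    intervalIntegral.integral_const, smul_eq_mul, mul_one, sq, mul_div_cancel_right₀ _ hM.ne']
  ring

theorem variance_id_cond_tail_Ici_le (ha : 0 < a) (hba : b ≤ a) (haM : a ≤ M) :
    Var[id; (tail b M)[|Ici a]] ≤ a * (2 * M - a) := by
  have := isProbabilityMeasure_cond_tail_Ici ha hba haM
  exact (variance_le_expectation_sq aestronglyMeasurable_id).trans_eq
    (integral_sq_cond_tail_Ici ha hba haM)

theorem map_eq_tail_one {Ω : Type*} [MeasurableSpace Ω] {μ : Measure Ω} [IsProbabilityMeasure μ]
    {v : Ω → ℝ} (hv : Measurable v) (hM : 1 ≤ M)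
    (h1 : ∀ x : ℝ, x < 1 → μ {ω | v ω ≤ x} = 0)
    (h2 : ∀ x : ℝ, 1 ≤ x → x < M → μ {ω | v ω ≤ x} = ENNReal.ofReal (1 - 1 / x))
    (h3 : μ {ω | v ω ≤ M} = 1) :
    μ.map v = tail 1 M := by
  have := Measure.isProbabilityMeasure_map (μ := μ) hv.aemeasurable
  refine Measure.ext_of_Iic _ _ fun x => ?_
  rw [Measure.map_apply hv measurableSet_Iic]
  rcases lt_or_ge x 1 with hx1 | hx1
  · rw [tail_Iic_of_lt hM hx1]
    exact h1 x hx1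
  rcases lt_or_ge x M with hxM | hMx
  · rw [tail_Iic_of_le_of_lt one_pos hx1 hxM, inv_one, ← one_div]
    exact h2 x hx1 hxM
  · rw [tail_Iic_of_le one_pos hM hMx, inv_one, ENNReal.ofReal_one]
    exact le_antisymm prob_le_one (h3 ▸ measure_mono fun ω (hω : v ω ≤ M) => hω.trans hMx)

end EqualRevenue

theorem stmt_19_general {Ω : Type*} [MeasurableSpace Ω] (μ : Measure Ω) [IsProbabilityMeasure μ]
    (M : ℝ) (v : Ω → ℝ) (hv : Measurable v)
    (h1 : ∀ x : ℝ, x < 1 → μ {ω | v ω ≤ x} = 0)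
    (h2 : ∀ x : ℝ, 1 ≤ x → x < M → μ {ω | v ω ≤ x} = ENNReal.ofReal (1 - 1 / x))
    (h3 : μ {ω | v ω ≤ M} = 1)
    (a : ℝ) (ha1 : 1 ≤ a) (haM : a ≤ M) :
    (∫ ω, v ω ∂(ProbabilityTheory.cond μ {ω | a ≤ v ω})) = a * (Real.log (M / a) + 1) ∧
    variance v (ProbabilityTheory.cond μ {ω | a ≤ v ω})
      ≤ a ^ 2 * Real.log (M / a) ^ 2 + 2 * M * a := by
  have ha : 0 < a := one_pos.trans_le ha1
  have hlaw := EqualRevenue.map_eq_tail_one hv (ha1.trans haM) h1 h2 h3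
  have hcond : μ[|{ω | a ≤ v ω}].map v = (EqualRevenue.tail 1 M)[|Ici a] :=
    hlaw ▸ map_cond_preimage hv measurableSet_Ici
  constructor
  · rw [← EqualRevenue.integral_id_cond_tail_Ici ha ha1 haM, ← hcond]
    exact (integral_map hv.aemeasurable aestronglyMeasurable_id).symm
  · rw [← variance_id_map hv.aemeasurable, hcond]
    linarith [EqualRevenue.variance_id_cond_tail_Ici_le ha ha1 haM, sq_nonneg a,
      sq_nonneg (a * Real.log (M / a))]

/-- **Conditional moments of the equal-revenue distribution on `[1, M]`** (used in the lower
bound, Theorem `lb`): for `1 ≤ a ≤ M`, conditioned on `v ≥ a` the mean is `a·(ln(M/a) + 1)`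
and the variance is at most `a²·(ln(M/a))² + 2·M·a`. -/
theorem stmt_19 {Ω : Type*} [MeasurableSpace Ω] (μ : Measure Ω) [IsProbabilityMeasure μ]
    (M : ℝ) (hM : 1 < M) (v : Ω → ℝ) (hv : Measurable v)
    (h1 : ∀ x : ℝ, x < 1 → μ {ω | v ω ≤ x} = 0)
    (h2 : ∀ x : ℝ, 1 ≤ x → x < M → μ {ω | v ω ≤ x} = ENNReal.ofReal (1 - 1 / x))
    (h3 : μ {ω | v ω ≤ M} = 1)
    (a : ℝ) (ha1 : 1 ≤ a) (haM : a ≤ M) :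
    (∫ ω, v ω ∂(ProbabilityTheory.cond μ {ω | a ≤ v ω})) = a * (Real.log (M / a) + 1) ∧
    variance v (ProbabilityTheory.cond μ {ω | a ≤ v ω})
      ≤ a ^ 2 * Real.log (M / a) ^ 2 + 2 * M * a :=
  stmt_19_general μ M v hv h1 h2 h3 a ha1 haM
end
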